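/- arXiv:2010.14667 — 5 statements merged into one kernel-verified Lean document; each statement's English description precedes it below -/
import Mathlib

section
/- Let (X, 𝔪) be a measure space with 0 < 𝔪(X) < ∞, let n ≥ 2 be an integer, set χ = n/(n−1), and let B ≥ 1. Let u : X → [0,∞) be measurable with u ∈ L¹(𝔪), and suppose that for every real k ≥ 1 one has ‖u‖_{L^{kχ}(𝔪)} ≤ (B k²)^{1/k} ‖u‖_{L^{k}(𝔪)}. Then the essential supremum of u satisfies essSup u ≤ Bⁿ · χ^{2n(n−1)} · ‖u‖_{L¹(𝔪)}. -/
/-!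
Applying the hypothesis with `k = χ ^ m` shows that `N m = ‖u‖_{L^{χ^m}}` satisfies
`N (m + 1) ≤ (B χ^{2m})^{χ^{-m}} N m`, hence
`N m ≤ B ^ (∑ χ^{-j}) * χ ^ (2 ∑ j χ^{-j}) * N 0`, and the two series sum to
`χ / (χ - 1) = n` and `χ / (χ - 1)² = n (n - 1)`. Markov's inequality gives
`t * 𝔪{t ≤ u}^{1/p} ≤ ‖u‖_{L^p}`, so letting `p = χ ^ m → ∞` shows that `u ≤ t` a.e. for every `t`
above the uniform bound on `N m`. If `u` is not essentially bounded its real `essSup` is the junk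
value `0`; if it is, all the integrals involved are finite.
-/

open MeasureTheory Real Filter Topology Finset

theorem sum_range_coe_mul_pow_le {r : ℝ} (hr0 : 0 ≤ r) (hr1 : r < 1) (m : ℕ) :
    ∑ j ∈ range m, (j : ℝ) * r ^ j ≤ r / (1 - r) ^ 2 := by
  have hr : ‖r‖ < 1 := by rwa [norm_of_nonneg hr0]
  rw [← tsum_coe_mul_geometric_of_norm_lt_one hr]
  exact (hasSum_coe_mul_geometric_of_norm_lt_one hr).summable.sum_le_tsum _
    fun j _ => by positivity

theorem moser_iterate_le_sum {χ B : ℝ} (hχ : 0 < χ) (hB : 0 < B) {N : ℕ → ℝ}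
    (hstep : ∀ m : ℕ, N (m + 1) ≤ (B * (χ ^ m) ^ 2) ^ (1 / χ ^ m) * N m) (m : ℕ) :
    N m ≤ B ^ (∑ j ∈ range m, χ⁻¹ ^ j) *
      χ ^ (2 * ∑ j ∈ range m, (j : ℝ) * χ⁻¹ ^ j) * N 0 := by
  induction m with
  | zero => simp
  | succ m ih =>
    have hfactor :
        (B * (χ ^ m) ^ 2) ^ (1 / χ ^ m) = B ^ χ⁻¹ ^ m * χ ^ (2 * (m * χ⁻¹ ^ m)) := by
      rw [mul_rpow hB.le (by positivity), ← pow_mul, ← rpow_natCast χ (m * 2), ← rpow_mul hχ.le,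
        one_div, inv_pow]
      push_cast
      ring_nf
    calc N (m + 1) ≤ B ^ χ⁻¹ ^ m * χ ^ (2 * (m * χ⁻¹ ^ m)) * N m := hfactor ▸ hstep m
      _ ≤ B ^ χ⁻¹ ^ m * χ ^ (2 * (m * χ⁻¹ ^ m)) * (B ^ (∑ j ∈ range m, χ⁻¹ ^ j) *
          χ ^ (2 * ∑ j ∈ range m, (j : ℝ) * χ⁻¹ ^ j) * N 0) := by gcongr
      _ = _ := by
        rw [sum_range_succ, sum_range_succ, mul_add, rpow_add hB, rpow_add hχ]
        ring

theorem moser_iterate_le {χ B : ℝ} (hχ : 1 < χ) (hB : 1 ≤ B) {N : ℕ → ℝ} (hN0 : 0 ≤ N 0)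
    (hstep : ∀ m : ℕ, N (m + 1) ≤ (B * (χ ^ m) ^ 2) ^ (1 / χ ^ m) * N m) (m : ℕ) :
    N m ≤ B ^ (χ / (χ - 1)) * χ ^ (2 * χ / (χ - 1) ^ 2) * N 0 := by
  have hχ0 : 0 < χ := zero_lt_one.trans hχ
  have hr0 : 0 ≤ χ⁻¹ := inv_nonneg.2 hχ0.le
  have hr1 : χ⁻¹ < 1 := inv_lt_one_of_one_lt₀ hχ
  have hχ1 : χ - 1 ≠ 0 := sub_ne_zero.2 hχ.ne'
  have hgeom : ∑ j ∈ range m, χ⁻¹ ^ j ≤ χ / (χ - 1) :=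
    calc ∑ j ∈ range m, χ⁻¹ ^ j ≤ χ⁻¹ ^ 0 / (1 - χ⁻¹) :=
          range_eq_Ico m ▸ geom_sum_Ico_le_of_lt_one hr0 hr1
      _ = χ / (χ - 1) := by field_simp
  have harith : 2 * ∑ j ∈ range m, (j : ℝ) * χ⁻¹ ^ j ≤ 2 * χ / (χ - 1) ^ 2 :=
    calc 2 * ∑ j ∈ range m, (j : ℝ) * χ⁻¹ ^ j ≤ 2 * (χ⁻¹ / (1 - χ⁻¹) ^ 2) := by
          gcongr; exact sum_range_coe_mul_pow_le hr0 hr1 m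
      _ = 2 * χ / (χ - 1) ^ 2 := by field_simp
  calc N m ≤ _ := moser_iterate_le_sum hχ0 (zero_lt_one.trans_le hB) hstep m
    _ ≤ _ := by gcongr; exact hχ.le

section Markov

variable {X : Type*} [MeasurableSpace X] {μ : Measure X}

theorem mul_measureReal_rpow_le_integral_rpow {u : X → ℝ} (hu0 : ∀ x, 0 ≤ u x) {p t : ℝ}
    (hp : 0 < p) (ht : 0 ≤ t) (hint : Integrable (fun x => u x ^ p) μ) :
    t * μ.real {x | t ≤ u x} ^ (1 / p) ≤ (∫ x, u x ^ p ∂μ) ^ (1 / p) := by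
  have hmarkov : t ^ p * μ.real {x | t ≤ u x} ≤ ∫ x, u x ^ p ∂μ := by
    have hlevel : {x | t ≤ u x} = {x | t ^ p ≤ u x ^ p} :=
      Set.ext fun x => (rpow_le_rpow_iff ht (hu0 x) hp).symm
    rw [hlevel]
    exact mul_meas_ge_le_integral_of_nonneg (.of_forall fun x => rpow_nonneg (hu0 x) p) hint _
  calc t * μ.real {x | t ≤ u x} ^ (1 / p) = (t ^ p * μ.real {x | t ≤ u x}) ^ (1 / p) := by
        rw [mul_rpow (by positivity) measureReal_nonneg, ← rpow_mul ht, mul_one_div_cancel hp.ne',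
          rpow_one]
    _ ≤ (∫ x, u x ^ p ∂μ) ^ (1 / p) := by gcongr

theorem le_of_integral_rpow_rpow_le {u : X → ℝ} {ι : Type*} {l : Filter ι} [l.NeBot] {p : ι → ℝ}
    (hu0 : ∀ x, 0 ≤ u x) (hp : Tendsto p l atTop) (hint : ∀ i, Integrable (fun x => u x ^ p i) μ)
    {M : ℝ} (hM : ∀ i, (∫ x, u x ^ p i ∂μ) ^ (1 / p i) ≤ M) {t : ℝ} (ht : 0 ≤ t)
    (hμ : μ.real {x | t ≤ u x} ≠ 0) : t ≤ M := by
  have hε : 0 < μ.real {x | t ≤ u x} := measureReal_nonneg.lt_of_ne' hμ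
  have hlim : Tendsto (fun i => t * μ.real {x | t ≤ u x} ^ (1 / p i)) l (𝓝 t) := by
    have hexp : Tendsto (fun i => 1 / p i) l (𝓝 0) := by
      simp only [one_div]
      exact tendsto_inv_atTop_zero.comp hp
    simpa using ((continuousAt_const_rpow hε.ne').tendsto.comp hexp).const_mul t
  refine le_of_tendsto hlim ((hp.eventually_gt_atTop 0).mono fun i hpi => ?_)
  exact (mul_measureReal_rpow_le_integral_rpow hu0 hpi ht (hint i)).trans (hM i)

-- In `ℝ`, `essSup f μ` is the junk value `0` when `f` is not cobounded, e.g. when `μ = 0`.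
theorem essSup_le_of_ae_le_of_nonneg {f : X → ℝ} {c : ℝ} (hc : 0 ≤ c) (hf : ∀ᵐ x ∂μ, f x ≤ c) :
    essSup f μ ≤ c := by
  by_cases hcobdd : IsCoboundedUnder (· ≤ ·) (ae μ) f
  · exact essSup_le_of_ae_le c hf hcobdd
  · rw [essSup, Real.limsup_of_not_isCoboundedUnder hcobdd]
    exact hc

theorem essSup_le_of_integral_rpow_rpow_le [IsFiniteMeasure μ] {u : X → ℝ} {ι : Type*}
    {l : Filter ι} [l.NeBot] {p : ι → ℝ}
    (hu0 : ∀ x, 0 ≤ u x) (hp : Tendsto p l atTop) (hint : ∀ i, Integrable (fun x => u x ^ p i) μ)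
    {M : ℝ} (hM : ∀ i, (∫ x, u x ^ p i ∂μ) ^ (1 / p i) ≤ M) : essSup u μ ≤ M := by
  obtain ⟨i, -⟩ := (hp.eventually_gt_atTop 0).exists
  have hM0 : 0 ≤ M :=
    (rpow_nonneg (integral_nonneg fun x => rpow_nonneg (hu0 x) _) _).trans (hM i)
  refine le_of_forall_gt_imp_ge_of_dense fun t ht => essSup_le_of_ae_le_of_nonneg ?_ ?_
  · linarith
  have hnull : μ {x | t ≤ u x} = 0 := by
    by_contra hμ
    have := le_of_integral_rpow_rpow_le hu0 hp hint hM (hM0.trans ht.le)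
      (by rwa [measureReal_ne_zero_iff])
    linarith
  exact ae_iff.2 (measure_mono_null (fun x hx => (not_le.1 hx).le) hnull)

end Markov

theorem moser_iteration_general
    {X : Type*} [MeasurableSpace X] (𝔪 : Measure X)
    (hfin : 𝔪 Set.univ < ⊤)
    (n : ℕ) (hn : 2 ≤ n) (χ : ℝ) (hχ : χ = (n : ℝ) / ((n : ℝ) - 1))
    (B : ℝ) (hB : 1 ≤ B)
    (u : X → ℝ) (hu : Measurable u) (hu0 : ∀ x, 0 ≤ u x)
    (hiter : ∀ k : ℝ, 1 ≤ k →
      (∫ x, u x ^ (k * χ) ∂𝔪) ^ (1 / (k * χ)) ≤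
        (B * k ^ 2) ^ (1 / k) * (∫ x, u x ^ k ∂𝔪) ^ (1 / k)) :
    essSup u 𝔪 ≤ B ^ n * χ ^ (2 * n * (n - 1)) * ∫ x, u x ∂𝔪 := by
  have : IsFiniteMeasure 𝔪 := ⟨hfin⟩
  have hn1 : (1 : ℝ) < n := by exact_mod_cast hn
  have hn0 : (n : ℝ) - 1 ≠ 0 := sub_ne_zero.2 hn1.ne'
  have hχ1 : 1 < χ := by rw [hχ, one_lt_div (by linarith)]; linarith
  have hχ_exp₁ : χ / (χ - 1) = n := by rw [hχ]; field_simp; ring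
  have hχ_exp₂ : 2 * χ / (χ - 1) ^ 2 = ((2 * n * (n - 1) : ℕ) : ℝ) := by
    rw [hχ, Nat.cast_mul, Nat.cast_mul, Nat.cast_sub (by omega : 1 ≤ n)]; field_simp; ring
  have hint0 : 0 ≤ ∫ x, u x ∂𝔪 := integral_nonneg hu0
  by_cases hbdd : IsBoundedUnder (· ≤ ·) (ae 𝔪) u
  swap
  · rw [essSup, Real.limsup_of_not_isBoundedUnder hbdd]
    positivity
  obtain ⟨C, hC : ∀ᵐ x ∂𝔪, u x ≤ C⟩ := hbdd
  have hint : ∀ p : ℝ, 0 ≤ p → Integrable (fun x => u x ^ p) 𝔪 := fun p hp =>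
    .of_bound (hu.pow_const p).aestronglyMeasurable (C ^ p) <| hC.mono fun x hx => by
      rw [norm_of_nonneg (rpow_nonneg (hu0 x) p)]
      exact rpow_le_rpow (hu0 x) hx hp
  have hN (m : ℕ) : (∫ x, u x ^ χ ^ m ∂𝔪) ^ (1 / χ ^ m) ≤
      B ^ n * χ ^ (2 * n * (n - 1)) * ∫ x, u x ∂𝔪 := by
    have := moser_iterate_le hχ1 hB (N := fun m => (∫ x, u x ^ χ ^ m ∂𝔪) ^ (1 / χ ^ m))
      (by simpa using hint0)
      (fun m => by simpa only [pow_succ] using hiter (χ ^ m) (one_le_pow₀ hχ1.le)) m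
    rw [hχ_exp₁, hχ_exp₂, rpow_natCast, rpow_natCast] at this
    simpa using this
  exact essSup_le_of_integral_rpow_rpow_le hu0 (tendsto_pow_atTop_atTop_of_one_lt hχ1)
    (fun m => hint _ (by positivity)) hN

/-- Moser (Morse) iteration lemma: if the `L^{kχ}` norm of a nonnegative `L¹`
function is controlled by `(B k²)^{1/k}` times its `L^k` norm for all `k ≥ 1`,
with `χ = n/(n-1)`, then its essential supremum is bounded by
`Bⁿ · χ^{2n(n-1)} · ‖u‖_{L¹}`. -/
theorem moser_iteration
    {X : Type*} [MeasurableSpace X] (𝔪 : Measure X)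
    (hpos : 0 < 𝔪 Set.univ) (hfin : 𝔪 Set.univ < ⊤)
    (n : ℕ) (hn : 2 ≤ n) (χ : ℝ) (hχ : χ = (n : ℝ) / ((n : ℝ) - 1))
    (B : ℝ) (hB : 1 ≤ B)
    (u : X → ℝ) (hu : Measurable u) (hu0 : ∀ x, 0 ≤ u x)
    (huL1 : Integrable u 𝔪)
    (hiter : ∀ k : ℝ, 1 ≤ k →
      (∫ x, u x ^ (k * χ) ∂𝔪) ^ (1 / (k * χ)) ≤
        (B * k ^ 2) ^ (1 / k) * (∫ x, u x ^ k ∂𝔪) ^ (1 / k)) :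
    essSup u 𝔪 ≤ B ^ n * χ ^ (2 * n * (n - 1)) * ∫ x, u x ∂𝔪 :=
  moser_iteration_general 𝔪 hfin n hn χ hχ B hB u hu hu0 hiter
end

section
/- Let (X, ν) be a measure space with 0 < ν(X) < ∞, let n ≥ 2 and n₁ ≥ 1 be integers, and let C ≥ 1, 0 < ε ≤ 1, A > 0 be real constants. Let u : X → [0,∞) be measurable with ∫_X u dν = A ε^{2n₁}, and suppose that for every real k ≥ 1 one has ‖u‖_{L^{kn/(n−1)}(ν)} ≤ C^{1/k} · ε^{−2n₁/(kn)} · k^{2/k} · ‖u‖_{L^{k}(ν)}. Then essSup u ≤ Cⁿ · (n/(n−1))^{2n(n−1)} · A. -/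
/-!
Write `χ = n/(n-1)` and `a_m = ‖u‖_{L^{χ^m}}`. The hypothesis at `k = χ^m` reads
`a_{m+1} ≤ (K k²)^{1/k} a_m` with `K = C ε^{-2n₁/n}`, so `a_m` is bounded by `a_0 = A ε^{2n₁}`
times `K^{Σ χ^{-j}} χ^{Σ 2j χ^{-j}} = K^n χ^{2n(n-1)}`, and the powers of `ε` cancel.
Since `χ^m → ∞`, Chebyshev's inequality turns this uniform bound on the `L^p` norms into the
bound on the essential supremum.
-/

open MeasureTheory Real Filter Finset

theorem le_prod_range_mul_of_le_mul {R : Type*} [CommSemiring R] [PartialOrder R]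
    [IsOrderedRing R] {a b : ℕ → R} (hb : ∀ m, 0 ≤ b m) (h : ∀ m, a (m + 1) ≤ b m * a m)
    (m : ℕ) : a m ≤ (∏ j ∈ range m, b j) * a 0 := by
  induction m with
  | zero => simp
  | succ m ih =>
    calc a (m + 1) ≤ b m * a m := h m
      _ ≤ b m * ((∏ j ∈ range m, b j) * a 0) := mul_le_mul_of_nonneg_left ih (hb m)
      _ = (∏ j ∈ range (m + 1), b j) * a 0 := by rw [prod_range_succ]; ring

theorem prod_range_rpow_le_rpow_of_hasSum {x s : ℝ} (hx : 1 ≤ x) {f : ℕ → ℝ}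
    (hf0 : ∀ j, 0 ≤ f j) (hf : HasSum f s) (m : ℕ) :
    ∏ j ∈ range m, x ^ f j ≤ x ^ s := by
  rw [← rpow_sum_of_pos (by linarith)]
  exact rpow_le_rpow_of_exponent_le hx (sum_le_hasSum _ (fun j _ => hf0 j) hf)

/-- With `y = θ⁻¹`, the `m`-th factor is `K^{y^m} θ^{2 m y^m}`, and the exponents sum to
`θ/(θ-1)` and `2θ/(θ-1)²`. -/
theorem le_of_moser_iteration {a : ℕ → ℝ} {K θ : ℝ} (hK : 1 ≤ K) (hθ : 1 < θ) (ha0 : 0 ≤ a 0)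
    (h : ∀ m : ℕ, a (m + 1) ≤ (K * (θ ^ m) ^ 2) ^ (1 / θ ^ m) * a m) (m : ℕ) :
    a m ≤ K ^ (θ / (θ - 1)) * θ ^ (2 * θ / (θ - 1) ^ 2) * a 0 := by
  have hθ0 : 0 < θ := by linarith
  set y := θ⁻¹ with hy
  have hy0 : 0 ≤ y := by positivity
  have hy1 : y < 1 := inv_lt_one_of_one_lt₀ hθ
  have hθ1 : θ - 1 ≠ 0 := by linarith
  have hfactor : ∀ j : ℕ, (K * (θ ^ j) ^ 2) ^ (1 / θ ^ j) = K ^ y ^ j * θ ^ (2 * (j * y ^ j)) := by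
    intro j
    rw [mul_rpow (by linarith) (by positivity), ← pow_mul, ← rpow_natCast θ (j * 2),
      ← rpow_mul hθ0.le, hy, inv_pow, one_div]
    push_cast
    ring_nf
  have hgeom : HasSum (fun j : ℕ => y ^ j) (θ / (θ - 1)) := by
    convert hasSum_geometric_of_lt_one hy0 hy1 using 1
    rw [hy]
    field_simp
  have hmulgeom : HasSum (fun j : ℕ => 2 * (j * y ^ j)) (2 * θ / (θ - 1) ^ 2) := by
    have := (hasSum_coe_mul_geometric_of_norm_lt_one
      (by rwa [norm_of_nonneg hy0] : ‖y‖ < 1)).mul_left 2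
    rwa [show 2 * (y / (1 - y) ^ 2) = 2 * θ / (θ - 1) ^ 2 by rw [hy]; field_simp] at this
  calc a m ≤ (∏ j ∈ range m, (K * (θ ^ j) ^ 2) ^ (1 / θ ^ j)) * a 0 :=
        le_prod_range_mul_of_le_mul (fun j => by positivity) h m
    _ = (∏ j ∈ range m, K ^ y ^ j) * (∏ j ∈ range m, θ ^ (2 * (j * y ^ j))) * a 0 := by
        simp only [hfactor, prod_mul_distrib]
    _ ≤ K ^ (θ / (θ - 1)) * θ ^ (2 * θ / (θ - 1) ^ 2) * a 0 := by
        refine mul_le_mul_of_nonneg_right (mul_le_mul ?_ ?_ (by positivity) (by positivity)) ha0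
        · exact prod_range_rpow_le_rpow_of_hasSum hK (fun j => by positivity) hgeom m
        · exact prod_range_rpow_le_rpow_of_hasSum hθ.le (fun j => by positivity) hmulgeom m

theorem rpow_mul_measureReal_le_integral_rpow {X : Type*} [MeasurableSpace X] {ν : Measure X}
    {u : X → ℝ} (hu0 : ∀ x, 0 ≤ u x) {p : ℝ} (hp : 0 < p)
    (hint : Integrable (fun x => u x ^ p) ν) {c : ℝ} (hc : 0 ≤ c) :
    c ^ p * ν.real {x | c ≤ u x} ≤ ∫ x, u x ^ p ∂ν := by
  have hset : {x | c ≤ u x} = {x | c ^ p ≤ u x ^ p} := by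
    ext x
    exact (rpow_le_rpow_iff hc (hu0 x) hp).symm
  rw [hset]
  exact mul_meas_ge_le_integral_of_nonneg (Eventually.of_forall fun x => rpow_nonneg (hu0 x) p)
    hint _

/-- If `u` is not essentially bounded, `essSup u ν` is the junk value `0`, whence `0 ≤ B`. -/
theorem essSup_le_of_frequently_integral_rpow_le {X : Type*} [MeasurableSpace X]
    {ν : Measure X} [IsFiniteMeasure ν] [NeZero ν] {u : X → ℝ} (hu : Measurable u)
    (hu0 : ∀ x, 0 ≤ u x) {B : ℝ} (hB : 0 ≤ B)
    (h : ∃ᶠ p : ℝ in atTop, ∫ x, u x ^ p ∂ν ≤ B ^ p) : essSup u ν ≤ B := by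
  by_cases hbdd : IsBoundedUnder (· ≤ ·) (ae ν) u
  swap
  · rw [essSup, Real.limsup_of_not_isBoundedUnder hbdd]
    exact hB
  obtain ⟨M, hM⟩ := hbdd
  refine le_of_forall_gt_imp_ge_of_dense fun c hc =>
    essSup_le_of_ae_le c ?_ (isCoboundedUnder_le_of_le _ hu0)
  have hc0 : 0 < c := hB.trans_lt hc
  have hint : ∀ p : ℝ, 0 ≤ p → Integrable (fun x => u x ^ p) ν := fun p hp =>
    Integrable.of_bound ((hu.pow_const p).aestronglyMeasurable) (M ^ p) <| by
      filter_upwards [hM] with x hx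
      rw [norm_of_nonneg (rpow_nonneg (hu0 x) p)]
      exact rpow_le_rpow (hu0 x) hx hp
  have htail : ∃ᶠ p : ℝ in atTop, ν.real {x | c ≤ u x} ≤ (B / c) ^ p := by
    refine (h.and_eventually (eventually_gt_atTop 0)).mono fun p ⟨hp, hp0⟩ => ?_
    rw [div_rpow hB hc0.le, le_div_iff₀' (by positivity)]
    exact (rpow_mul_measureReal_le_integral_rpow hu0 hp0 (hint p hp0.le) hc0.le).trans hp
  have hzero : ν.real {x | c ≤ u x} ≤ 0 :=
    ge_of_tendsto_of_frequently (tendsto_rpow_atTop_of_base_lt_one _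
      (by linarith [div_nonneg hB hc0.le]) ((div_lt_one hc0).2 hc)) htail
  have hnull : ν {x | c ≤ u x} = 0 := by
    rw [← measureReal_eq_zero_iff]
    exact le_antisymm hzero measureReal_nonneg
  rw [EventuallyLE, ae_iff]
  simpa using measure_mono_null (Set.ofPred_subset_ofPred.2 fun x (hx : c < u x) => hx.le) hnull

theorem scaled_moser_constant_eq {n : ℕ} (hn : 2 ≤ n) (n₁ : ℕ) (C A : ℝ) {ε χ : ℝ} (hε : 0 < ε)
    (hχ : χ = n / (n - 1)) :
    (C * ε ^ (-(2 * (n₁ : ℝ)) / n)) ^ (χ / (χ - 1)) * χ ^ (2 * χ / (χ - 1) ^ 2) *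
      (A * ε ^ (2 * n₁)) = C ^ n * χ ^ (2 * n * (n - 1)) * A := by
  have hn1 : (1 : ℝ) < n := by exact_mod_cast hn
  have hn0 : (n : ℝ) ≠ 0 := by positivity
  have hn10 : (n : ℝ) - 1 ≠ 0 := by linarith
  have hexp1 : χ / (χ - 1) = n := by
    rw [hχ]
    field_simp
    ring
  have hexp2 : 2 * χ / (χ - 1) ^ 2 = ((2 * n * (n - 1) : ℕ) : ℝ) := by
    rw [hχ]
    push_cast [Nat.cast_sub (by omega : 1 ≤ n)]
    field_simp
    ring
  have hcancel : ε ^ (-(2 * (n₁ : ℝ)) / n * n) * ε ^ (2 * n₁) = 1 := by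
    rw [div_mul_cancel₀ _ hn0, rpow_neg hε.le, show 2 * (n₁ : ℝ) = ((2 * n₁ : ℕ) : ℝ) by
      push_cast; ring, rpow_natCast, inv_mul_cancel₀ (by positivity)]
  rw [hexp1, hexp2, rpow_natCast, rpow_natCast, mul_pow, ← rpow_mul_natCast hε.le]
  linear_combination (C ^ n * χ ^ (2 * n * (n - 1)) * A) * hcancel

theorem eps_scaled_moser_iteration_general
    {X : Type*} [MeasurableSpace X] (ν : Measure X)
    (hpos : 0 < ν Set.univ) (hfin : ν Set.univ < ⊤)
    (n n₁ : ℕ) (hn : 2 ≤ n)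
    (C ε A : ℝ) (hC : 1 ≤ C) (hε0 : 0 < ε) (hε1 : ε ≤ 1) (hA : 0 < A)
    (u : X → ℝ) (hu : Measurable u) (hu0 : ∀ x, 0 ≤ u x)
    (huL1 : ∫ x, u x ∂ν = A * ε ^ (2 * n₁))
    (hiter : ∀ k : ℝ, 1 ≤ k →
      (∫ x, u x ^ (k * ((n : ℝ) / ((n : ℝ) - 1))) ∂ν) ^
          (1 / (k * ((n : ℝ) / ((n : ℝ) - 1)))) ≤
        C ^ (1 / k) * ε ^ (-(2 * (n₁ : ℝ)) / (k * n)) * k ^ (2 / k) *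
          (∫ x, u x ^ k ∂ν) ^ (1 / k)) :
    essSup u ν ≤ C ^ n * ((n : ℝ) / ((n : ℝ) - 1)) ^ (2 * n * (n - 1)) * A := by
  have : IsFiniteMeasure ν := ⟨hfin⟩
  have : NeZero ν := ⟨fun h => by simp [h] at hpos⟩
  have hn1 : (1 : ℝ) < n := by exact_mod_cast hn
  set χ : ℝ := n / (n - 1) with hχ
  have hχ1 : 1 < χ := by rw [hχ, one_lt_div (by linarith)]; linarith
  set K : ℝ := C * ε ^ (-(2 * (n₁ : ℝ)) / n) with hK
  have hK1 : 1 ≤ K := one_le_mul_of_one_le_of_one_le hC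
    (one_le_rpow_of_pos_of_le_one_of_nonpos hε0 hε1
      (div_nonpos_of_nonpos_of_nonneg (neg_nonpos.2 (by positivity)) (by positivity)))
  have hfactor : ∀ k : ℝ, 0 < k →
      C ^ (1 / k) * ε ^ (-(2 * (n₁ : ℝ)) / (k * n)) * k ^ (2 / k) = (K * k ^ 2) ^ (1 / k) := by
    intro k hk
    rw [hK, mul_rpow (by positivity) (by positivity), mul_rpow (by positivity) (by positivity),
      ← rpow_mul hε0.le, ← rpow_natCast k 2, ← rpow_mul hk.le]
    congr 3
    · field_simp
    · norm_num [div_eq_mul_inv]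
  set a : ℕ → ℝ := fun m => (∫ x, u x ^ (χ ^ m) ∂ν) ^ (1 / χ ^ m) with ha
  have hstep : ∀ m : ℕ, a (m + 1) ≤ (K * (χ ^ m) ^ 2) ^ (1 / χ ^ m) * a m := fun m => by
    have h := hiter (χ ^ m) (one_le_pow₀ hχ1.le)
    rwa [hfactor _ (by positivity), ← pow_succ] at h
  have ha0 : a 0 = A * ε ^ (2 * n₁) := by simp [ha, huL1]
  refine essSup_le_of_frequently_integral_rpow_le hu hu0 (by positivity)
    ((tendsto_pow_atTop_atTop_of_one_lt hχ1).frequently (Frequently.of_forall fun m => ?_))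
  rw [← rpow_inv_le_iff_of_pos (integral_nonneg fun x => rpow_nonneg (hu0 x) _) (by positivity)
    (by positivity), ← one_div, ← scaled_moser_constant_eq hn n₁ C A hε0 hχ, ← ha0]
  exact le_of_moser_iteration hK1 hχ1 (by rw [ha0]; positivity) hstep m

/-- The ε-scaled Moser iteration: if `∫ u = A ε^{2n₁}` and the `L^{kn/(n-1)}`
norm of `u` is bounded by `C^{1/k} ε^{-2n₁/(kn)} k^{2/k}` times its `L^k` norm
for all `k ≥ 1`, then `essSup u ≤ Cⁿ (n/(n-1))^{2n(n-1)} A`. -/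
theorem eps_scaled_moser_iteration
    {X : Type*} [MeasurableSpace X] (ν : Measure X)
    (hpos : 0 < ν Set.univ) (hfin : ν Set.univ < ⊤)
    (n n₁ : ℕ) (hn : 2 ≤ n) (hn₁ : 1 ≤ n₁)
    (C ε A : ℝ) (hC : 1 ≤ C) (hε0 : 0 < ε) (hε1 : ε ≤ 1) (hA : 0 < A)
    (u : X → ℝ) (hu : Measurable u) (hu0 : ∀ x, 0 ≤ u x)
    (huL1 : ∫ x, u x ∂ν = A * ε ^ (2 * n₁))
    (hiter : ∀ k : ℝ, 1 ≤ k →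
      (∫ x, u x ^ (k * ((n : ℝ) / ((n : ℝ) - 1))) ∂ν) ^
          (1 / (k * ((n : ℝ) / ((n : ℝ) - 1)))) ≤
        C ^ (1 / k) * ε ^ (-(2 * (n₁ : ℝ)) / (k * n)) * k ^ (2 / k) *
          (∫ x, u x ^ k ∂ν) ^ (1 / k)) :
    essSup u ν ≤ C ^ n * ((n : ℝ) / ((n : ℝ) - 1)) ^ (2 * n * (n - 1)) * A :=
  eps_scaled_moser_iteration_general ν hpos hfin n n₁ hn C ε A hC hε0 hε1 hA u hu hu0 huL1 hiter
end

section
/- Let (X, 𝔪) be a measure space with V := 𝔪(X) satisfying 0 < V < ∞, and let C₀ > 1, C ≥ 0, and 0 < A ≤ 1 be constants. Let f : X → [0,∞) be measurable with f ∈ L²(𝔪), and suppose: (i) ∫_X f² d𝔪 ≤ (1/V)(∫_X f d𝔪)² + C ∫_X f d𝔪; and (ii) there is a measurable set U ⊆ X with 𝔪(U) ≥ V/C₀ and f ≤ 2/A 𝔪-almost everywhere on U. Then ∫_X f d𝔪 ≤ (C₀²C + 2C₀√(1+C₀)) · V / A. -/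
/-! Write `I = ∫ f`, `J = ∫ f²` and `s = √(1 - 1/C₀) < 1`. On `U` the integral of `f` is at most
`2V/A`. On `Uᶜ`, whose measure is at most `(1 - 1/C₀) V`, Cauchy–Schwarz bounds it by
`s √(V J)`, and (i) says `V J ≤ I² + C V I ≤ (I + C V / 2)²`. Hence
`I ≤ 2V/A + s (I + C V / 2)`, and absorbing `s I` into the left side costs the factor
`1 / (1 - s) = C₀ (1 + s) ≤ C₀ √(1 + C₀)`. -/

open MeasureTheory

namespace MeasureTheory

variable {α : Type*} [MeasurableSpace α] {μ : Measure α} {f : α → ℝ}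

theorem sq_integral_le_measureReal_mul_integral_sq [IsFiniteMeasure μ] (hf : MemLp f 2 μ) :
    (∫ x, f x ∂μ) ^ 2 ≤ μ.real Set.univ * ∫ x, f x ^ 2 ∂μ := by
  have holder := integral_mul_le_Lp_mul_Lq_of_nonneg Real.HolderConjugate.two_two
    (ae_of_all μ fun x => abs_nonneg (f x)) (ae_of_all μ fun _ => zero_le_one)
    (by rw [ENNReal.ofReal_ofNat]; exact hf.abs) (memLp_const (1 : ℝ))
  simp only [mul_one, one_pow, integral_const, smul_eq_mul, Real.rpow_two, sq_abs,
    ← Real.sqrt_eq_rpow] at holder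
  rw [← Real.sqrt_mul (integral_nonneg fun x => sq_nonneg (f x)), mul_comm] at holder
  calc (∫ x, f x ∂μ) ^ 2 ≤ (∫ x, |f x| ∂μ) ^ 2 := by
        rw [← sq_abs]; gcongr; exact abs_integral_le_integral_abs
    _ ≤ μ.real Set.univ * ∫ x, f x ^ 2 ∂μ :=
        (Real.le_sqrt (integral_nonneg fun x => abs_nonneg _) (by positivity)).1 holder

theorem integral_le_mul_measureReal_add_sqrt [IsFiniteMeasure μ] {s : Set α} {M : ℝ}
    (hs : MeasurableSet s) (hf : MemLp f 2 μ) (hfs : ∀ᵐ x ∂μ, x ∈ s → f x ≤ M) :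
    ∫ x, f x ∂μ ≤ M * μ.real s + √(μ.real sᶜ * ∫ x, f x ^ 2 ∂μ) := by
  have hfi : Integrable f μ := hf.integrable one_le_two
  have on_s : ∫ x in s, f x ∂μ ≤ M * μ.real s :=
    calc ∫ x in s, f x ∂μ ≤ ∫ _ in s, M ∂μ :=
          setIntegral_mono_on_ae hfi.integrableOn integrableOn_const hs hfs
      _ = M * μ.real s := by rw [setIntegral_const, smul_eq_mul, mul_comm]
  have on_compl : ∫ x in sᶜ, f x ∂μ ≤ √(μ.real sᶜ * ∫ x, f x ^ 2 ∂μ) :=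
    calc ∫ x in sᶜ, f x ∂μ ≤ |∫ x in sᶜ, f x ∂μ| := le_abs_self _
      _ ≤ √(μ.real sᶜ * ∫ x in sᶜ, f x ^ 2 ∂μ) := by
          apply Real.abs_le_sqrt
          simpa only [measureReal_restrict_apply_univ] using
            sq_integral_le_measureReal_mul_integral_sq (hf.restrict sᶜ)
      _ ≤ √(μ.real sᶜ * ∫ x, f x ^ 2 ∂μ) := by
          gcongr √(_ * ?_)
          exact setIntegral_le_integral hf.integrable_sq (ae_of_all μ fun x => sq_nonneg (f x))
  rw [← integral_add_compl hs hfi]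
  exact add_le_add on_s on_compl

end MeasureTheory

theorem one_add_sqrt_one_sub_inv_le_sqrt_one_add {C₀ : ℝ} (hC₀ : 1 ≤ C₀) :
    1 + √(1 - C₀⁻¹) ≤ √(1 + C₀) := by
  have hinv : C₀ * C₀⁻¹ = 1 := mul_inv_cancel₀ (by positivity)
  have hs2 : √(1 - C₀⁻¹) ^ 2 = 1 - C₀⁻¹ :=
    Real.sq_sqrt (by linarith [inv_le_one_of_one_le₀ hC₀])
  -- AM-GM for `C₀ - 1` and `C₀⁻¹`, whose product is `1 - C₀⁻¹`
  have amgm : 2 * √(1 - C₀⁻¹) ≤ (C₀ - 1) + C₀⁻¹ := by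
    nlinarith [sq_nonneg ((C₀ - 1) - C₀⁻¹), inv_pos.2 (by positivity : 0 < C₀),
      Real.sqrt_nonneg (1 - C₀⁻¹)]
  apply Real.le_sqrt_of_sq_le
  nlinarith

theorem le_of_le_add_sqrt_one_sub_inv_mul {C₀ a b I : ℝ} (hC₀ : 1 ≤ C₀) (ha : 0 ≤ a)
    (hb : 0 ≤ b) (h : I ≤ a + √(1 - C₀⁻¹) * (I + b)) :
    I ≤ C₀ * √(1 + C₀) * a + 2 * C₀ * b := by
  set s := √(1 - C₀⁻¹)
  have hs0 : 0 ≤ s := Real.sqrt_nonneg _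
  have hs1 : s ≤ 1 := Real.sqrt_le_one.2 (by linarith [inv_nonneg.2 (by linarith : 0 ≤ C₀)])
  have hinv : C₀ * (1 + s) * (1 - s) = 1 := by
    have hs2 : s ^ 2 = 1 - C₀⁻¹ := Real.sq_sqrt (by linarith [inv_le_one_of_one_le₀ hC₀])
    linear_combination (-C₀) * hs2 + mul_inv_cancel₀ (by positivity : C₀ ≠ 0)
  calc I = C₀ * (1 + s) * ((1 - s) * I) := by linear_combination (-I) * hinv
    _ ≤ C₀ * (1 + s) * (a + s * b) := by gcongr; linarith
    _ = C₀ * (1 + s) * a + C₀ * ((1 + s) * s) * b := by ring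
    _ ≤ C₀ * √(1 + C₀) * a + C₀ * 2 * b := by
        gcongr
        · exact one_add_sqrt_one_sub_inv_le_sqrt_one_add hC₀
        · nlinarith
    _ = C₀ * √(1 + C₀) * a + 2 * C₀ * b := by ring

theorem mul_le_sq_of_le_one_div_mul_sq_add_mul {V J I C : ℝ} (hV : 0 < V)
    (h : J ≤ 1 / V * I ^ 2 + C * I) : V * J ≤ (I + C * V / 2) ^ 2 := by
  have hVJ := mul_le_mul_of_nonneg_left h hV.le
  rw [mul_add, ← mul_assoc, mul_one_div_cancel hV.ne', one_mul] at hVJ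
  nlinarith [sq_nonneg (C * V)]

theorem L1_estimate_from_poincare_general
    {X : Type*} [MeasurableSpace X] (𝔪 : Measure X) (V C₀ C A : ℝ)
    (hV : V = (𝔪 Set.univ).toReal) (hVpos : 0 < 𝔪 Set.univ)
    (hVfin : 𝔪 Set.univ < ⊤)
    (hC₀ : 1 < C₀) (hC : 0 ≤ C) (hA0 : 0 < A) (hA1 : A ≤ 1)
    (f : X → ℝ) (hf0 : ∀ x, 0 ≤ f x)
    (hfL2 : MemLp f 2 𝔪)
    (hi : ∫ x, f x ^ 2 ∂𝔪 ≤ (1 / V) * (∫ x, f x ∂𝔪) ^ 2 + C * ∫ x, f x ∂𝔪)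
    (hii : ∃ U : Set X, MeasurableSet U ∧ ENNReal.ofReal (V / C₀) ≤ 𝔪 U ∧
      ∀ᵐ x ∂𝔪, x ∈ U → f x ≤ 2 / A) :
    ∫ x, f x ∂𝔪 ≤ (C₀ ^ 2 * C + 2 * C₀ * Real.sqrt (1 + C₀)) * V / A := by
  have : IsFiniteMeasure 𝔪 := ⟨hVfin⟩
  obtain ⟨U, hU, hUm, hUb⟩ := hii
  set I := ∫ x, f x ∂𝔪
  set J := ∫ x, f x ^ 2 ∂𝔪
  have hVreal : 𝔪.real Set.univ = V := hV.symm
  have hV0 : 0 < V := hV ▸ ENNReal.toReal_pos hVpos.ne' hVfin.ne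
  have hI0 : 0 ≤ I := integral_nonneg hf0
  have hU_le : 𝔪.real U ≤ V := hVreal ▸ measureReal_mono (Set.subset_univ U)
  have hUc_le : 𝔪.real Uᶜ ≤ (1 - C₀⁻¹) * V := by
    have hUm' : V / C₀ ≤ 𝔪.real U :=
      (ENNReal.ofReal_le_iff_le_toReal (measure_ne_top 𝔪 U)).1 hUm
    rw [measureReal_compl hU, hVreal]
    linarith [div_eq_inv_mul V C₀]
  have hVJ : V * J ≤ (I + C * V / 2) ^ 2 := mul_le_sq_of_le_one_div_mul_sq_add_mul hV0 hi
  have hsplit : I ≤ 2 / A * V + √(1 - C₀⁻¹) * (I + C * V / 2) :=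
    calc I ≤ 2 / A * 𝔪.real U + √(𝔪.real Uᶜ * J) :=
          integral_le_mul_measureReal_add_sqrt hU hfL2 hUb
      _ ≤ 2 / A * V + √((1 - C₀⁻¹) * (I + C * V / 2) ^ 2) := by
          gcongr 2 / A * ?_ + √?_
          calc 𝔪.real Uᶜ * J ≤ (1 - C₀⁻¹) * V * J := by gcongr
            _ ≤ (1 - C₀⁻¹) * (I + C * V / 2) ^ 2 := by
                rw [mul_assoc]; gcongr; linarith [inv_le_one_of_one_le₀ hC₀.le]
      _ = 2 / A * V + √(1 - C₀⁻¹) * (I + C * V / 2) := by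
          rw [Real.sqrt_mul' _ (sq_nonneg _), Real.sqrt_sq (by positivity)]
  calc I ≤ C₀ * √(1 + C₀) * (2 / A * V) + 2 * C₀ * (C * V / 2) :=
        le_of_le_add_sqrt_one_sub_inv_mul hC₀.le (by positivity) (by positivity) hsplit
    _ = 2 * C₀ * √(1 + C₀) * V / A + C₀ * C * V := by ring
    _ ≤ 2 * C₀ * √(1 + C₀) * V / A + C₀ ^ 2 * C * V / A := by
        gcongr 2 * C₀ * √(1 + C₀) * V / A + ?_
        rw [le_div_iff₀ hA0]
        nlinarith [mul_nonneg (mul_nonneg hC hV0.le) (by linarith : 0 ≤ C₀)]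
    _ = (C₀ ^ 2 * C + 2 * C₀ * √(1 + C₀)) * V / A := by ring

/-- The L¹ estimate in the supremum part of the C⁰ bound: if a nonnegative
`L²` function satisfies the Poincaré-type reverse inequality (i) and is
bounded by `2/A` on a set of measure at least `V/C₀`, then
`∫ f ≤ (C₀²C + 2C₀√(1+C₀)) V / A`. -/
theorem L1_estimate_from_poincare
    {X : Type*} [MeasurableSpace X] (𝔪 : Measure X) (V C₀ C A : ℝ)
    (hV : V = (𝔪 Set.univ).toReal) (hVpos : 0 < 𝔪 Set.univ)
    (hVfin : 𝔪 Set.univ < ⊤)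
    (hC₀ : 1 < C₀) (hC : 0 ≤ C) (hA0 : 0 < A) (hA1 : A ≤ 1)
    (f : X → ℝ) (hf : Measurable f) (hf0 : ∀ x, 0 ≤ f x)
    (hfL2 : MemLp f 2 𝔪)
    (hi : ∫ x, f x ^ 2 ∂𝔪 ≤ (1 / V) * (∫ x, f x ∂𝔪) ^ 2 + C * ∫ x, f x ∂𝔪)
    (hii : ∃ U : Set X, MeasurableSet U ∧ ENNReal.ofReal (V / C₀) ≤ 𝔪 U ∧
      ∀ᵐ x ∂𝔪, x ∈ U → f x ≤ 2 / A) :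
    ∫ x, f x ∂𝔪 ≤ (C₀ ^ 2 * C + 2 * C₀ * Real.sqrt (1 + C₀)) * V / A :=
  L1_estimate_from_poincare_general 𝔪 V C₀ C A hV hVpos hVfin hC₀ hC hA0 hA1 f hf0 hfL2 hi hii
end

section
/- Let (X, 𝔪) be a measure space, let φ : X → ℝ and h : X → [0,∞) be measurable, and let C > 0, 0 < δ ≤ 1 and a real number k ≥ 2 be constants. Assume e^{−φ} ≤ δ 𝔪-almost everywhere, that e^{−(k−1)φ} and e^{−(k−1)φ} h² are integrable, and that ∫_X e^{−(k−1)φ} h² d𝔪 ≤ C ∫_X ( e^{−(k+1)φ} h + e^{−kφ} ) d𝔪. Then ∫_X e^{−(k−1)φ} h² d𝔪 ≤ (C² δ⁴ + 2Cδ) ∫_X e^{−(k−1)φ} d𝔪. -/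
open MeasureTheory Real

/-! Young's inequality `e² h ≤ h² / (2C) + C e⁴ / 2` with `e = e^{-φ}`, multiplied by the weight
`e^{-(k-1)φ}`, bounds the right-hand side of the hypothesis by `(1/(2C)) ∫ e^{-(k-1)φ} h²` plus a
multiple of `∫ e^{-(k-1)φ}`; after multiplying by `C`, half of `∫ e^{-(k-1)φ} h²` is absorbed into the
left-hand side. -/

lemma mul_le_sq_div_add_mul_sq {C : ℝ} (hC : 0 < C) (a b : ℝ) :
    a * b ≤ a ^ 2 / (2 * C) + C * b ^ 2 / 2 := by
  rw [div_add_div _ _ (by positivity) two_ne_zero, le_div_iff₀ (by positivity)]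
  nlinarith [sq_nonneg (a - C * b)]

/-- Unlike `integral_mono_of_nonneg`, only the dominating function has to be nonnegative:
a non-integrable `f` has integral `0`. -/
lemma integral_mono_of_nonneg_right {α : Type*} [MeasurableSpace α] {μ : Measure α}
    {f g : α → ℝ} (hgi : Integrable g μ) (hg : 0 ≤ᵐ[μ] g) (hfg : f ≤ᵐ[μ] g) :
    ∫ a, f a ∂μ ≤ ∫ a, g a ∂μ := by
  by_cases hfi : Integrable f μ
  · exact integral_mono_ae hfi hgi hfg
  · rw [integral_undef hfi]
    exact integral_nonneg_of_ae hg

lemma sq_mul_add_le_of_nonneg_of_le {C δ e : ℝ} (hC : 0 < C) (he : 0 ≤ e) (heδ : e ≤ δ) (s : ℝ) :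
    e ^ 2 * s + e ≤ s ^ 2 / (2 * C) + (C * δ ^ 4 / 2 + δ) := by
  have hyoung := mul_le_sq_div_add_mul_sq hC s (e ^ 2)
  have he4 : e ^ 4 ≤ δ ^ 4 := pow_le_pow_left₀ he heδ 4
  have : C * e ^ 4 ≤ C * δ ^ 4 := mul_le_mul_of_nonneg_left he4 hC.le
  nlinarith

lemma exp_mul_add_exp_le {C δ : ℝ} (hC : 0 < C) (k t s : ℝ) (ht : exp (-t) ≤ δ) :
    exp (-(k + 1) * t) * s + exp (-k * t) ≤
      exp (-(k - 1) * t) * s ^ 2 / (2 * C) + (C * δ ^ 4 / 2 + δ) * exp (-(k - 1) * t) := by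
  have hsplit₁ : exp (-(k + 1) * t) = exp (-(k - 1) * t) * exp (-t) ^ 2 := by
    rw [← exp_nat_mul, ← exp_add]; ring_nf
  have hsplit₂ : exp (-k * t) = exp (-(k - 1) * t) * exp (-t) := by
    rw [← exp_add]; ring_nf
  calc exp (-(k + 1) * t) * s + exp (-k * t)
      = exp (-(k - 1) * t) * (exp (-t) ^ 2 * s + exp (-t)) := by rw [hsplit₁, hsplit₂]; ring
    _ ≤ exp (-(k - 1) * t) * (s ^ 2 / (2 * C) + (C * δ ^ 4 / 2 + δ)) :=
        mul_le_mul_of_nonneg_left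
          (sq_mul_add_le_of_nonneg_of_le hC (exp_pos _).le ht s) (exp_pos _).le
    _ = _ := by ring

lemma integral_exp_mul_add_exp_le {X : Type*} [MeasurableSpace X] (𝔪 : Measure X) (φ h : X → ℝ)
    {C δ : ℝ} (hC : 0 < C) (k : ℝ) (hbd : ∀ᵐ x ∂𝔪, exp (-φ x) ≤ δ)
    (hint1 : Integrable (fun x => exp (-(k - 1) * φ x)) 𝔪)
    (hint2 : Integrable (fun x => exp (-(k - 1) * φ x) * h x ^ 2) 𝔪) :
    ∫ x, (exp (-(k + 1) * φ x) * h x + exp (-k * φ x)) ∂𝔪 ≤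
      (∫ x, exp (-(k - 1) * φ x) * h x ^ 2 ∂𝔪) / (2 * C) +
        (C * δ ^ 4 / 2 + δ) * ∫ x, exp (-(k - 1) * φ x) ∂𝔪 := by
  have hint2' := hint2.div_const (2 * C)
  have hint1' := hint1.const_mul (C * δ ^ 4 / 2 + δ)
  rw [← integral_div, ← integral_const_mul, ← integral_add hint2' hint1']
  refine integral_mono_of_nonneg_right (hint2'.add hint1') ?_ ?_
  · filter_upwards [hbd] with x hx
    have : 0 ≤ δ := (exp_pos _).le.trans hx
    positivity
  · filter_upwards [hbd] with x hx
    exact exp_mul_add_exp_le hC k (φ x) (h x) hx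

theorem weighted_absorption_infimum_general
    {X : Type*} [MeasurableSpace X] (𝔪 : Measure X)
    (φ h : X → ℝ)
    (C δ k : ℝ) (hC : 0 < C)
    (hbd : ∀ᵐ x ∂𝔪, Real.exp (-φ x) ≤ δ)
    (hint1 : Integrable (fun x => Real.exp (-(k - 1) * φ x)) 𝔪)
    (hint2 : Integrable (fun x => Real.exp (-(k - 1) * φ x) * h x ^ 2) 𝔪)
    (hmain : ∫ x, Real.exp (-(k - 1) * φ x) * h x ^ 2 ∂𝔪 ≤
      C * ∫ x, (Real.exp (-(k + 1) * φ x) * h x + Real.exp (-k * φ x)) ∂𝔪) :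
    ∫ x, Real.exp (-(k - 1) * φ x) * h x ^ 2 ∂𝔪 ≤
      (C ^ 2 * δ ^ 4 + 2 * C * δ) * ∫ x, Real.exp (-(k - 1) * φ x) ∂𝔪 := by
  set I := ∫ x, exp (-(k - 1) * φ x) * h x ^ 2 ∂𝔪
  set J := ∫ x, exp (-(k - 1) * φ x) ∂𝔪
  have hbound : I ≤ C * (I / (2 * C) + (C * δ ^ 4 / 2 + δ) * J) :=
    hmain.trans (mul_le_mul_of_nonneg_left
      (integral_exp_mul_add_exp_le 𝔪 φ h hC k hbd hint1 hint2) hC.le)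
  have hhalf : C * (I / (2 * C) + (C * δ ^ 4 / 2 + δ) * J) =
      I / 2 + (C ^ 2 * δ ^ 4 + 2 * C * δ) * J / 2 := by
    field_simp
  linarith

/-- Weighted Cauchy–Schwarz absorption in the infimum estimate: if
`e^{-φ} ≤ δ` a.e. and
`∫ e^{-(k-1)φ} h² ≤ C ∫ (e^{-(k+1)φ} h + e^{-kφ})`, then
`∫ e^{-(k-1)φ} h² ≤ (C²δ⁴ + 2Cδ) ∫ e^{-(k-1)φ}`. -/
theorem weighted_absorption_infimum
    {X : Type*} [MeasurableSpace X] (𝔪 : Measure X)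
    (φ h : X → ℝ) (hφm : Measurable φ) (hhm : Measurable h)
    (hh0 : ∀ x, 0 ≤ h x)
    (C δ k : ℝ) (hC : 0 < C) (hδ0 : 0 < δ) (hδ1 : δ ≤ 1) (hk : 2 ≤ k)
    (hbd : ∀ᵐ x ∂𝔪, Real.exp (-φ x) ≤ δ)
    (hint1 : Integrable (fun x => Real.exp (-(k - 1) * φ x)) 𝔪)
    (hint2 : Integrable (fun x => Real.exp (-(k - 1) * φ x) * h x ^ 2) 𝔪)
    (hmain : ∫ x, Real.exp (-(k - 1) * φ x) * h x ^ 2 ∂𝔪 ≤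
      C * ∫ x, (Real.exp (-(k + 1) * φ x) * h x + Real.exp (-k * φ x)) ∂𝔪) :
    ∫ x, Real.exp (-(k - 1) * φ x) * h x ^ 2 ∂𝔪 ≤
      (C ^ 2 * δ ^ 4 + 2 * C * δ) * ∫ x, Real.exp (-(k - 1) * φ x) ∂𝔪 :=
  weighted_absorption_infimum_general 𝔪 φ h C δ k hC hbd hint1 hint2 hmain
end

section
/- Let (X, 𝔪) be a measure space, let φ : X → ℝ and h : X → [0,∞) be measurable, and let C > 0, 0 < δ ≤ 1 and a real number k ≥ 1 be constants. Assume e^{−φ} ≤ δ 𝔪-almost everywhere, that e^{kφ} and e^{(k+1)φ} h² are integrable, and that ∫_X e^{(k+1)φ} h² d𝔪 ≤ C ∫_X ( e^{(k−1)φ} h + e^{kφ} ) d𝔪. Then ∫_X e^{(k+1)φ} h² d𝔪 ≤ (C² δ³ + 2C) ∫_X e^{kφ} d𝔪, and consequently ∫_X e^{kφ} h² d𝔪 ≤ δ (C² δ³ + 2C) ∫_X e^{kφ} d𝔪. -/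
/-!
Write `w = e^{-φ} ≤ δ`. Pointwise, Young's inequality in the form
`c w t ≤ t² / (2w) + c² w³ / 2`, multiplied by `e^{kφ}`, bounds `C e^{(k-1)φ} h` by
`½ e^{(k+1)φ} h² + ½ C² δ³ e^{kφ}`. Integrating and inserting this into the hypothesis, half of
`∫ e^{(k+1)φ} h²` is absorbed into the left-hand side, which gives the first estimate. The second
follows from `e^{kφ} = w e^{(k+1)φ} ≤ δ e^{(k+1)φ}`.
-/

open MeasureTheory Real

lemma mul_mul_le_sq_div_add_pow (c w t : ℝ) (hw : 0 < w) :
    c * w * t ≤ t ^ 2 / (2 * w) + c ^ 2 * w ^ 3 / 2 := by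
  rw [div_add_div _ _ (by positivity) two_ne_zero, le_div_iff₀ (by positivity)]
  nlinarith [sq_nonneg (t - c * w ^ 2)]

lemma exp_sub_one_mul_eq (k θ : ℝ) : exp ((k - 1) * θ) = exp (k * θ) * exp (-θ) := by
  rw [← exp_add]; ring_nf

lemma exp_add_one_mul_eq (k θ : ℝ) : exp ((k + 1) * θ) = exp (k * θ) / exp (-θ) := by
  rw [eq_div_iff (exp_pos _).ne', ← exp_add]; ring_nf

section ExpWeight

variable {δ θ : ℝ}

lemma mul_exp_sub_one_mul_le (c k t : ℝ) (hθ : exp (-θ) ≤ δ) :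
    c * (exp ((k - 1) * θ) * t) ≤
      exp ((k + 1) * θ) * t ^ 2 / 2 + c ^ 2 * δ ^ 3 / 2 * exp (k * θ) := by
  have hw3 : exp (-θ) ^ 3 ≤ δ ^ 3 := pow_le_pow_left₀ (exp_nonneg _) hθ 3
  have hyoung := mul_mul_le_sq_div_add_pow c (exp (-θ)) t (exp_pos _)
  rw [exp_sub_one_mul_eq, exp_add_one_mul_eq]
  calc c * (exp (k * θ) * exp (-θ) * t) = exp (k * θ) * (c * exp (-θ) * t) := by ring
    _ ≤ exp (k * θ) * (t ^ 2 / (2 * exp (-θ)) + c ^ 2 * exp (-θ) ^ 3 / 2) :=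
        mul_le_mul_of_nonneg_left hyoung (exp_nonneg _)
    _ ≤ exp (k * θ) * (t ^ 2 / (2 * exp (-θ)) + c ^ 2 * δ ^ 3 / 2) := by gcongr
    _ = exp (k * θ) / exp (-θ) * t ^ 2 / 2 + c ^ 2 * δ ^ 3 / 2 * exp (k * θ) := by
        field_simp

lemma exp_mul_mul_le (k : ℝ) {t : ℝ} (ht : 0 ≤ t) (hθ : exp (-θ) ≤ δ) :
    exp (k * θ) * t ≤ δ * (exp ((k + 1) * θ) * t) := by
  calc exp (k * θ) * t = exp (-θ) * (exp ((k + 1) * θ) * t) := by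
        rw [← mul_assoc, ← exp_add]; ring_nf
    _ ≤ δ * (exp ((k + 1) * θ) * t) := mul_le_mul_of_nonneg_right hθ (by positivity)

end ExpWeight

section Integral

variable {X : Type*} [MeasurableSpace X] {μ : Measure X}

lemma integral_le_of_absorb {F f G : X → ℝ} {B C : ℝ} (hF : Integrable F μ)
    (hf : Integrable f μ) (hG : Integrable G μ) (hpt : ∀ᵐ x ∂μ, C * f x ≤ F x / 2 + B * G x)
    (hmain : ∫ x, F x ∂μ ≤ C * ∫ x, (f x + G x) ∂μ) :
    ∫ x, F x ∂μ ≤ 2 * (B + C) * ∫ x, G x ∂μ := by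
  have hbound : C * ∫ x, f x ∂μ ≤ (∫ x, F x ∂μ) / 2 + B * ∫ x, G x ∂μ := by
    rw [← integral_const_mul, ← integral_div, ← integral_const_mul, ← integral_add]
    · exact integral_mono_ae (hf.const_mul C) ((hF.div_const 2).add (hG.const_mul B)) hpt
    · exact hF.div_const 2
    · exact hG.const_mul B
  rw [integral_add hf hG] at hmain
  linarith

variable {φ h : X → ℝ} {δ : ℝ}

lemma integrable_exp_sub_one_mul (k : ℝ) (hφm : Measurable φ) (hhm : Measurable h)
    (hbd : ∀ᵐ x ∂μ, exp (-φ x) ≤ δ) (hint1 : Integrable (fun x => exp (k * φ x)) μ)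
    (hint2 : Integrable (fun x => exp ((k + 1) * φ x) * h x ^ 2) μ) :
    Integrable (fun x => exp ((k - 1) * φ x) * h x) μ := by
  refine ((hint2.div_const 2).add (hint1.const_mul (δ ^ 3 / 2))).mono' (by fun_prop) ?_
  filter_upwards [hbd] with x hx
  simpa [norm_mul, abs_of_pos (exp_pos _), sq_abs] using
    mul_exp_sub_one_mul_le 1 k |h x| hx

end Integral

theorem weighted_absorption_supremum_general
    {X : Type*} [MeasurableSpace X] (𝔪 : Measure X)
    (φ h : X → ℝ) (hφm : Measurable φ) (hhm : Measurable h)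
    (C δ k : ℝ) (hδ0 : 0 < δ)
    (hbd : ∀ᵐ x ∂𝔪, Real.exp (-φ x) ≤ δ)
    (hint1 : Integrable (fun x => Real.exp (k * φ x)) 𝔪)
    (hint2 : Integrable (fun x => Real.exp ((k + 1) * φ x) * h x ^ 2) 𝔪)
    (hmain : ∫ x, Real.exp ((k + 1) * φ x) * h x ^ 2 ∂𝔪 ≤
      C * ∫ x, (Real.exp ((k - 1) * φ x) * h x + Real.exp (k * φ x)) ∂𝔪) :
    (∫ x, Real.exp ((k + 1) * φ x) * h x ^ 2 ∂𝔪 ≤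
        (C ^ 2 * δ ^ 3 + 2 * C) * ∫ x, Real.exp (k * φ x) ∂𝔪) ∧
      ∫ x, Real.exp (k * φ x) * h x ^ 2 ∂𝔪 ≤
        δ * (C ^ 2 * δ ^ 3 + 2 * C) * ∫ x, Real.exp (k * φ x) ∂𝔪 := by
  have hweighted : ∫ x, exp ((k + 1) * φ x) * h x ^ 2 ∂𝔪 ≤
      (C ^ 2 * δ ^ 3 + 2 * C) * ∫ x, exp (k * φ x) ∂𝔪 := by
    refine (integral_le_of_absorb hint2
      (integrable_exp_sub_one_mul k hφm hhm hbd hint1 hint2) hint1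
      (hbd.mono fun x hx => mul_exp_sub_one_mul_le C k (h x) hx) hmain).trans_eq ?_
    ring
  refine ⟨hweighted, ?_⟩
  calc ∫ x, exp (k * φ x) * h x ^ 2 ∂𝔪
      ≤ ∫ x, δ * (exp ((k + 1) * φ x) * h x ^ 2) ∂𝔪 :=
        integral_mono_of_nonneg (ae_of_all _ fun x => by positivity) (hint2.const_mul δ)
          (hbd.mono fun x hx => exp_mul_mul_le k (sq_nonneg (h x)) hx)
    _ = δ * ∫ x, exp ((k + 1) * φ x) * h x ^ 2 ∂𝔪 := integral_const_mul _ _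
    _ ≤ δ * ((C ^ 2 * δ ^ 3 + 2 * C) * ∫ x, exp (k * φ x) ∂𝔪) := by gcongr
    _ = δ * (C ^ 2 * δ ^ 3 + 2 * C) * ∫ x, exp (k * φ x) ∂𝔪 := by ring

/-- Weighted Cauchy–Schwarz absorption in the supremum estimate: if
`e^{-φ} ≤ δ` a.e. and
`∫ e^{(k+1)φ} h² ≤ C ∫ (e^{(k-1)φ} h + e^{kφ})`, then
`∫ e^{(k+1)φ} h² ≤ (C²δ³ + 2C) ∫ e^{kφ}` and
`∫ e^{kφ} h² ≤ δ(C²δ³ + 2C) ∫ e^{kφ}`. -/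
theorem weighted_absorption_supremum
    {X : Type*} [MeasurableSpace X] (𝔪 : Measure X)
    (φ h : X → ℝ) (hφm : Measurable φ) (hhm : Measurable h)
    (hh0 : ∀ x, 0 ≤ h x)
    (C δ k : ℝ) (hC : 0 < C) (hδ0 : 0 < δ) (hδ1 : δ ≤ 1) (hk : 1 ≤ k)
    (hbd : ∀ᵐ x ∂𝔪, Real.exp (-φ x) ≤ δ)
    (hint1 : Integrable (fun x => Real.exp (k * φ x)) 𝔪)
    (hint2 : Integrable (fun x => Real.exp ((k + 1) * φ x) * h x ^ 2) 𝔪)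
    (hmain : ∫ x, Real.exp ((k + 1) * φ x) * h x ^ 2 ∂𝔪 ≤
      C * ∫ x, (Real.exp ((k - 1) * φ x) * h x + Real.exp (k * φ x)) ∂𝔪) :
    (∫ x, Real.exp ((k + 1) * φ x) * h x ^ 2 ∂𝔪 ≤
        (C ^ 2 * δ ^ 3 + 2 * C) * ∫ x, Real.exp (k * φ x) ∂𝔪) ∧
      ∫ x, Real.exp (k * φ x) * h x ^ 2 ∂𝔪 ≤
        δ * (C ^ 2 * δ ^ 3 + 2 * C) * ∫ x, Real.exp (k * φ x) ∂𝔪 :=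
  weighted_absorption_supremum_general 𝔪 φ h hφm hhm C δ k hδ0 hbd hint1 hint2 hmain
end
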